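/- arXiv:1908.10693 — 4 statements merged into one kernel-verified Lean document; each statement's English description precedes it below -/
import Mathlib

section
/- Let α ∈ (0,1), γ := (1+α)/(1−α), and let x > 0 be a real number. Let i := ⌈log_γ x⌉ (the DDSketch bucket index of x) and define the estimate x̃ := 2γ^i/(γ+1). Then |x̃ − x| ≤ α·x. -/
/-- DDSketch bucket estimate accuracy (Lemma 1 of the DDSketch paper):
for `α ∈ (0,1)`, `γ = (1+α)/(1-α)`, `x > 0`, bucket index `i = ⌈log_γ x⌉`
and estimate `x̃ = 2γ^i/(γ+1)`, we have `|x̃ - x| ≤ α·x`. -/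
theorem ddsketch_bucket_estimate_accurate
    (α x γ : ℝ) (hα : α ∈ Set.Ioo (0 : ℝ) 1) (hx : 0 < x)
    (hγ : γ = (1 + α) / (1 - α))
    (i : ℤ) (hi : i = ⌈Real.logb γ x⌉)
    (xt : ℝ) (hxt : xt = 2 * γ ^ i / (γ + 1)) :
    |xt - x| ≤ α * x := by
  obtain ⟨hα0, hα1⟩ := hα
  have h1mα : (0:ℝ) < 1 - α := by linarith
  have hγ1 : 1 < γ := by
    rw [hγ, lt_div_iff₀ h1mα]; linarith
  have hγ0 : (0:ℝ) < γ := by linarith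
  -- bounds from the ceiling
  have hle : Real.logb γ x ≤ (i : ℝ) := by
    rw [hi]; exact_mod_cast Int.le_ceil _
  have hlt : ((i : ℝ) - 1) < Real.logb γ x := by
    rw [hi]; linarith [Int.ceil_lt_add_one (Real.logb γ x)]
  have hxle : x ≤ γ ^ i := by
    have := (Real.logb_le_iff_le_rpow hγ1 hx).mp hle
    rwa [Real.rpow_intCast] at this
  have hxgt : γ ^ (i - 1) < x := by
    have h := (Real.lt_logb_iff_rpow_lt hγ1 hx).mp hlt
    rwa [show ((i:ℝ) - 1) = ((i - 1 : ℤ) : ℝ) by push_cast; ring, Real.rpow_intCast] at h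
  have hpow : γ ^ i = γ * γ ^ (i - 1) := by
    rw [mul_comm, ← zpow_add_one₀ (ne_of_gt hγ0)]; congr 1; ring
  have hxt' : xt = (1 - α) * γ ^ i := by
    rw [hxt, hγ]
    have h2 : (1 + α) / (1 - α) + 1 = 2 / (1 - α) := by field_simp; ring
    rw [h2]
    field_simp
  have hkey : (1 - α) * γ = 1 + α := by
    rw [hγ]; field_simp
  rw [abs_le]
  constructor
  · -- xt - x ≥ -αx : xt = (1-α)γ^i ≥ (1-α)x
    have : (1 - α) * x ≤ (1 - α) * γ ^ i :=
      mul_le_mul_of_nonneg_left hxle (le_of_lt h1mα)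
    rw [hxt']; linarith
  · -- xt ≤ (1+α)x : γ^i = γ γ^{i-1} < γ x
    have hlt2 : γ ^ i < γ * x := by
      rw [hpow]; exact mul_lt_mul_of_pos_left hxgt hγ0
    have : (1 - α) * γ ^ i ≤ (1 - α) * (γ * x) :=
      mul_le_mul_of_nonneg_left (le_of_lt hlt2) (le_of_lt h1mα)
    rw [hxt']
    nlinarith [hkey]
end

section
/- Let α ∈ (0,1), γ := (1+α)/(1−α), let S be a multiset of n ≥ 1 positive reals with order statistics x_{(1)} ≤ ⋯ ≤ x_{(n)}, let 0 ≤ q ≤ 1, and let x_q := x_{(⌊1+q(n−1)⌋)}. Define c(y) := #{elements of S that are ≤ y} and i := min{j ∈ ℤ : c(γ^j) > q(n−1)}. Then i = ⌈log_γ x_q⌉. -/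
open Finset in
/-- The DDSketch quantile query finds the bucket of the `q`-quantile:
with `x : Fin n → ℝ` the order statistics (sorted values) of a multiset of `n`
positive reals, `x_q` the `q`-quantile (the element of rank `⌊1 + q(n-1)⌋`),
`c y` the number of elements `≤ y`, and `i` the least integer `j` with
`c(γ^j) > q(n-1)`, we have `i = ⌈log_γ x_q⌉`. -/
theorem ddsketch_quantile_query_finds_bucket
    (α γ : ℝ) (hα : α ∈ Set.Ioo (0 : ℝ) 1) (hγ : γ = (1 + α) / (1 - α))
    (n : ℕ) (hn : 1 ≤ n) (x : Fin n → ℝ) (hmono : Monotone x)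
    (hpos : ∀ j, 0 < x j)
    (q : ℝ) (hq : q ∈ Set.Icc (0 : ℝ) 1)
    (k : Fin n) (hk : (k : ℕ) + 1 = ⌊1 + q * ((n : ℝ) - 1)⌋₊)
    (c : ℝ → ℕ) (hc : ∀ y, c y = #{j : Fin n | x j ≤ y})
    (i : ℤ) (hi : IsLeast {j : ℤ | q * ((n : ℝ) - 1) < c (γ ^ j)} i) :
    i = ⌈Real.logb γ (x k)⌉ := by
  obtain ⟨hα0, hα1⟩ := hα
  obtain ⟨hq0, hq1⟩ := hq
  have hγ1 : 1 < γ := by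
    rw [hγ, lt_div_iff₀ (by linarith)]; linarith
  have hγ0 : 0 < γ := by linarith
  have hn1 : (0:ℝ) ≤ (n:ℝ) - 1 := by
    have : (1:ℝ) ≤ n := by exact_mod_cast hn
    linarith
  have hqn0 : 0 ≤ q * ((n:ℝ) - 1) := mul_nonneg hq0 hn1
  -- bounds on q(n-1)
  have hkb : ((k:ℕ):ℝ) ≤ q * ((n:ℝ) - 1) ∧ q * ((n:ℝ) - 1) < (k:ℕ) + 1 := by
    have h1 : ((⌊1 + q * ((n:ℝ) - 1)⌋₊ : ℕ) : ℝ) ≤ 1 + q * ((n:ℝ) - 1) :=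
      Nat.floor_le (by linarith)
    have h2 : 1 + q * ((n:ℝ) - 1) < ((⌊1 + q * ((n:ℝ) - 1)⌋₊ : ℕ) : ℝ) + 1 :=
      Nat.lt_floor_add_one _
    rw [← hk] at h1 h2
    constructor <;> push_cast at h1 h2 ⊢ <;> linarith
  -- key equivalence
  have key : ∀ y : ℝ, q * ((n:ℝ) - 1) < c y ↔ x k ≤ y := by
    intro y
    have hcard : ((k:ℕ) + 1 ≤ c y) ↔ x k ≤ y := by
      rw [hc]
      constructor
      · intro h
        by_contra hxy
        push_neg at hxy
        have hsub : ({j : Fin n | x j ≤ y} : Finset (Fin n)) ⊆ Iio k := by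
          intro j hj
          simp only [mem_filter, mem_univ, true_and] at hj
          simp only [mem_Iio]
          by_contra hjk
          push_neg at hjk
          exact absurd (le_trans (hmono hjk) hj) (not_le.mpr hxy)
        have := card_le_card hsub
        rw [Fin.card_Iio] at this
        omega
      · intro h
        have hsub : Iic k ⊆ ({j : Fin n | x j ≤ y} : Finset (Fin n)) := by
          intro j hj
          simp only [mem_Iic] at hj
          simp only [mem_filter, mem_univ, true_and]
          exact le_trans (hmono hj) h
        have := card_le_card hsub
        rwa [Fin.card_Iic] at this
    constructor
    · intro h
      apply hcard.mp
      have : ((k:ℕ):ℝ) < (c y : ℝ) := lt_of_le_of_lt hkb.1 h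
      exact_mod_cast Nat.lt_iff_add_one_le.mp (by exact_mod_cast this)
    · intro h
      have : ((k:ℕ) + 1 : ℝ) ≤ (c y : ℝ) := by exact_mod_cast hcard.mpr h
      linarith [hkb.2]
  -- the set is {j | ⌈logb γ (x k)⌉ ≤ j}
  have hset : {j : ℤ | q * ((n:ℝ) - 1) < c (γ ^ j)} = {j : ℤ | ⌈Real.logb γ (x k)⌉ ≤ j} := by
    ext j
    simp only [Set.mem_setOf_eq, key, Int.ceil_le]
    rw [← Real.rpow_intCast γ j, (Real.logb_le_iff_le_rpow hγ1 (hpos k)).symm]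
  have h2 : IsLeast {j : ℤ | q * ((n:ℝ) - 1) < c (γ ^ j)} ⌈Real.logb γ (x k)⌉ := by
    rw [hset]
    exact ⟨Set.mem_setOf.mpr le_rfl, fun j hj => hj⟩
  exact hi.unique h2
end

section
/- Let α ∈ (0,1), γ := (1+α)/(1−α), let S be a multiset of n ≥ 1 positive reals with order statistics x_{(1)} ≤ ⋯ ≤ x_{(n)}, let 0 ≤ q ≤ 1, and let x_q := x_{(⌊1+q(n−1)⌋)}. Define c(y) := #{elements of S that are ≤ y} and i := min{j ∈ ℤ : c(γ^j) > q(n−1)}. Then the output 2γ^i/(γ+1) of the DDSketch quantile query satisfies |2γ^i/(γ+1) − x_q| ≤ α·x_q. -/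
open Finset in
/-- Correctness of the DDSketch quantile query (Proposition 1 of the DDSketch
paper): with `x : Fin n → ℝ` the order statistics (sorted values) of a multiset
of `n` positive reals, `x_q` the `q`-quantile (the element of rank
`⌊1 + q(n-1)⌋`), `c y` the number of elements `≤ y`, and `i` the least integer
`j` with `c(γ^j) > q(n-1)`, the output `2γ^i/(γ+1)` of the quantile query is an
`α`-accurate `q`-quantile: `|2γ^i/(γ+1) - x_q| ≤ α·x_q`. -/
theorem ddsketch_quantile_query_accurate
    (α γ : ℝ) (hα : α ∈ Set.Ioo (0 : ℝ) 1) (hγ : γ = (1 + α) / (1 - α))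
    (n : ℕ) (hn : 1 ≤ n) (x : Fin n → ℝ) (hmono : Monotone x)
    (hpos : ∀ j, 0 < x j)
    (q : ℝ) (hq : q ∈ Set.Icc (0 : ℝ) 1)
    (k : Fin n) (hk : (k : ℕ) + 1 = ⌊1 + q * ((n : ℝ) - 1)⌋₊)
    (c : ℝ → ℕ) (hc : ∀ y, c y = #{j : Fin n | x j ≤ y})
    (i : ℤ) (hi : IsLeast {j : ℤ | q * ((n : ℝ) - 1) < c (γ ^ j)} i) :
    |2 * γ ^ i / (γ + 1) - x k| ≤ α * x k := by
  obtain ⟨hα0, hα1⟩ := hα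
  obtain ⟨hq0, hq1⟩ := hq
  have h1α : (0:ℝ) < 1 - α := by linarith
  have hγ1 : 1 < γ := by rw [hγ, lt_div_iff₀ h1α]; linarith
  have hγ0 : 0 < γ := by linarith
  have key : 2 * γ ^ i / (γ + 1) = (1 - α) * γ ^ i := by
    rw [hγ]
    field_simp
    ring
  have hn1 : (0:ℝ) ≤ (n:ℝ) - 1 := by
    have : (1:ℝ) ≤ n := by exact_mod_cast hn
    linarith
  have hq0' : 0 ≤ q * ((n:ℝ) - 1) := mul_nonneg hq0 hn1
  have hfloor_le : ((k:ℕ) + 1 : ℝ) ≤ 1 + q * ((n:ℝ)-1) := by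
    rw_mod_cast [hk]
    exact Nat.floor_le (by linarith)
  have hkq : (k:ℝ) ≤ q * ((n:ℝ)-1) := by push_cast at hfloor_le; linarith
  have hqk : q * ((n:ℝ)-1) < (k:ℕ) + 1 := by
    have h2 := Nat.lt_floor_add_one (1 + q * ((n:ℝ)-1))
    rw [← hk] at h2
    push_cast at h2 ⊢
    linarith
  obtain ⟨hi_mem, hi_lb⟩ := hi
  have hxk_le : x k ≤ γ ^ i := by
    have hcard : (k:ℕ) + 1 ≤ c (γ ^ i) := by
      have h3 : (k:ℝ) < (c (γ ^ i) : ℝ) := lt_of_le_of_lt hkq hi_mem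
      exact_mod_cast Nat.lt_iff_add_one_le.mp (by exact_mod_cast h3)
    rw [hc] at hcard
    by_contra h
    push_neg at h
    have hsub : ({j : Fin n | x j ≤ γ ^ i} : Finset (Fin n)) ⊆ Finset.Iio k := by
      intro j hj
      simp only [Finset.mem_filter, Finset.mem_univ, true_and] at hj
      simp only [Finset.mem_Iio]
      by_contra hjk
      push_neg at hjk
      exact absurd (hmono hjk) (by linarith [hj])
    have hle := Finset.card_le_card hsub
    rw [Fin.card_Iio] at hle
    omega
  have hnotmem : ¬ q * ((n:ℝ)-1) < c (γ ^ (i-1)) := by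
    intro hmem
    have := hi_lb hmem
    omega
  have hcle : c (γ ^ (i-1)) ≤ (k:ℕ) := by
    push_neg at hnotmem
    have : (c (γ ^ (i-1)) : ℝ) < (k:ℕ) + 1 := lt_of_le_of_lt hnotmem hqk
    exact_mod_cast Nat.lt_add_one_iff.mp (by exact_mod_cast this)
  have hxk_gt : γ ^ (i-1) < x k := by
    by_contra h
    push_neg at h
    have hsub : Finset.Iic k ⊆ ({j : Fin n | x j ≤ γ ^ (i-1)} : Finset (Fin n)) := by
      intro j hj
      simp only [Finset.mem_Iic] at hj
      simp only [Finset.mem_filter, Finset.mem_univ, true_and]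
      exact le_trans (hmono hj) h
    have hle := Finset.card_le_card hsub
    rw [Fin.card_Iic, ← hc] at hle
    omega
  have hzpow : γ ^ (i-1) = γ ^ i / γ := by
    rw [zpow_sub_one₀ (ne_of_gt hγ0)]
    ring
  have hgg : γ ^ i < γ * x k := by
    rw [hzpow, div_lt_iff₀ hγ0] at hxk_gt
    linarith
  have hγx : γ * x k = (1 + α) / (1 - α) * x k := by rw [hγ]
  have hxpos := hpos k
  rw [key, abs_le]
  constructor
  · nlinarith
  · have hprod : (1 - α) * γ = 1 + α := by
      rw [hγ]; field_simp
    nlinarith [mul_lt_mul_of_pos_left hgg h1α]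
end

section
/- Let n ≥ 1 be a natural number and let t, q be reals with 0 < t < q ≤ 1/2. Then ((q−t)/q)^{qn} · ((1−q+t)/(1−q))^{(1−q)n} ≤ exp(−2·n·t²), where the powers are real powers. -/
/-!
The left-hand side equals `exp (-n · D(q ‖ q - t))`, where `D` is the Kullback–Leibler divergence
between Bernoulli laws, so the estimate is the binary Pinsker inequality `D(q ‖ p) ≥ 2 (q - p)²`.
For `p ≤ q` it holds because `p ↦ 2 (q - p)² - D(q ‖ p)` vanishes at `q` and has derivative
`(q - p) (1 / (p (1 - p)) - 4) ≥ 0`, as `p (1 - p) ≤ 1 / 4`; the case `q ≤ p` follows by the symmetry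
`D(1 - q ‖ 1 - p) = D(q ‖ p)`.
-/

open Real Set

/-- `binaryKL q p` is `D(Bernoulli q ‖ Bernoulli p)`. -/
noncomputable def binaryKL (q p : ℝ) : ℝ :=
  q * log (q / p) + (1 - q) * log ((1 - q) / (1 - p))

variable {p q : ℝ}

lemma binaryKL_one_sub_one_sub : binaryKL (1 - q) (1 - p) = binaryKL q p := by
  simp only [binaryKL, sub_sub_cancel]
  ring

lemma binaryKL_self : binaryKL q q = 0 := by
  simp [binaryKL]

lemma hasDerivAt_binaryKL (hq₀ : 0 < q) (hq₁ : q < 1) (hp₀ : 0 < p) (hp₁ : p < 1) :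
    HasDerivAt (binaryKL q) ((p - q) / (p * (1 - p))) p := by
  have hp₁' : 1 - p ≠ 0 := by linarith
  have hq₁' : 1 - q ≠ 0 := by linarith
  have hleft := ((hasDerivAt_const p q).fun_div (hasDerivAt_id' p) hp₀.ne').log
    (div_ne_zero hq₀.ne' hp₀.ne')
  have hright := ((hasDerivAt_const p (1 - q)).fun_div ((hasDerivAt_id' p).const_sub 1) hp₁').log
    (div_ne_zero hq₁' hp₁')
  refine ((hleft.const_mul q).fun_add (hright.const_mul (1 - q))).congr_deriv ?_
  field_simp
  ring

lemma monotoneOn_two_mul_sq_sub_binaryKL (hq₀ : 0 < q) (hq₁ : q < 1) :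
    MonotoneOn (fun x => 2 * (q - x) ^ 2 - binaryKL q x) (Ioc 0 q) := by
  have hderiv : ∀ x ∈ Ioo 0 1, HasDerivAt (fun x => 2 * (q - x) ^ 2 - binaryKL q x)
      ((q - x) * (1 / (x * (1 - x)) - 4)) x := by
    rintro x ⟨hx₀, hx₁⟩
    refine ((((hasDerivAt_id' x).const_sub q).pow 2 |>.const_mul 2).fun_sub
      (hasDerivAt_binaryKL hq₀ hq₁ hx₀ hx₁)).congr_deriv ?_
    have : 1 - x ≠ 0 := by linarith
    field_simp
    ring
  refine monotoneOn_of_deriv_nonneg (convex_Ioc 0 q) ?_ ?_ ?_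
  · exact fun x ⟨hx₀, hxq⟩ ↦
      (hderiv x ⟨hx₀, hxq.trans_lt hq₁⟩).continuousAt.continuousWithinAt
  · rw [interior_Ioc]
    exact fun x ⟨hx₀, hxq⟩ ↦
      (hderiv x ⟨hx₀, hxq.trans hq₁⟩).differentiableAt.differentiableWithinAt
  · rw [interior_Ioc]
    rintro x ⟨hx₀, hxq⟩
    rw [(hderiv x ⟨hx₀, hxq.trans hq₁⟩).deriv]
    have hquarter : x * (1 - x) ≤ 1 / 4 := by nlinarith [sq_nonneg (x - 1 / 2)]
    have hfour : 4 ≤ 1 / (x * (1 - x)) := by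
      rw [le_div_iff₀ (by nlinarith)]
      linarith
    exact mul_nonneg (by linarith) (by linarith)

lemma two_mul_sq_le_binaryKL_of_le (hp₀ : 0 < p) (hpq : p ≤ q) (hq₁ : q < 1) :
    2 * (q - p) ^ 2 ≤ binaryKL q p := by
  have hq₀ : 0 < q := hp₀.trans_le hpq
  simpa [binaryKL_self] using
    monotoneOn_two_mul_sq_sub_binaryKL hq₀ hq₁ ⟨hp₀, hpq⟩ ⟨hq₀, le_rfl⟩ hpq

theorem two_mul_sq_le_binaryKL (hp₀ : 0 < p) (hp₁ : p < 1) (hq₀ : 0 < q) (hq₁ : q < 1) :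
    2 * (q - p) ^ 2 ≤ binaryKL q p := by
  rcases le_total p q with hpq | hqp
  · exact two_mul_sq_le_binaryKL_of_le hp₀ hpq hq₁
  · rw [← binaryKL_one_sub_one_sub]
    convert two_mul_sq_le_binaryKL_of_le (sub_pos.2 hp₁) (sub_le_sub_left hqp 1)
      (sub_lt_self 1 hq₀) using 1
    ring

lemma div_rpow_mul_div_rpow_eq_exp_neg_binaryKL (hp₀ : 0 < p) (hp₁ : p < 1) (hq₀ : 0 < q)
    (hq₁ : q < 1) (n : ℝ) :
    (p / q) ^ (q * n) * ((1 - p) / (1 - q)) ^ ((1 - q) * n) = exp (-(n * binaryKL q p)) := by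
  rw [rpow_def_of_pos (by positivity), rpow_def_of_pos (div_pos (by linarith) (by linarith)),
    ← exp_add, binaryKL, ← inv_div p, ← inv_div (1 - p), log_inv, log_inv]
  congr 1
  ring

theorem chernoff_quantile_estimate_general
    (n : ℕ) (t q : ℝ) (ht : 0 < t) (htq : t < q) (hq : q ≤ 1 / 2) :
    ((q - t) / q) ^ (q * n) * ((1 - q + t) / (1 - q)) ^ ((1 - q) * n) ≤
      Real.exp (-2 * n * t ^ 2) := by
  have hq₁ : q < 1 := by linarith
  have hp₀ : 0 < q - t := sub_pos.2 htq
  have hp₁ : q - t < 1 := by linarith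
  rw [show 1 - q + t = 1 - (q - t) by ring,
    div_rpow_mul_div_rpow_eq_exp_neg_binaryKL hp₀ hp₁ (ht.trans htq) hq₁, exp_le_exp]
  have hpinsker := two_mul_sq_le_binaryKL hp₀ hp₁ (ht.trans htq) hq₁
  rw [sub_sub_cancel] at hpinsker
  linarith [mul_le_mul_of_nonneg_left hpinsker n.cast_nonneg]

/-- The key analytic estimate in the sample-quantile concentration lemma of the
DDSketch paper: for `n ≥ 1` and `0 < t < q ≤ 1/2`,
`((q-t)/q)^(qn) · ((1-q+t)/(1-q))^((1-q)n) ≤ exp(-2nt²)` (real powers). -/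
theorem chernoff_quantile_estimate
    (n : ℕ) (hn : 1 ≤ n) (t q : ℝ) (ht : 0 < t) (htq : t < q) (hq : q ≤ 1 / 2) :
    ((q - t) / q) ^ (q * n) * ((1 - q + t) / (1 - q)) ^ ((1 - q) * n) ≤
      Real.exp (-2 * n * t ^ 2) :=
  chernoff_quantile_estimate_general n t q ht htq hq
end
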